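/- arXiv:1703.00284 — 2 statements merged into one kernel-verified Lean document; each statement's English description precedes it below -/
import Mathlib

section
/- Under the assumptions that all inputs satisfy ‖x‖ ≤ c, that the projection coordinates are bounded by M, and using Lemma 21 of Bousquet–Elisseeff (‖Δθ‖² ≤ (c/(2m))|Δf(xᵢ)| where Δf(x) = ⟨Δθ, μ_L(x)⟩), the leave-one-out parameter change satisfies ‖Δθ‖ ≤ (c/(2m))·√L·M, and consequently for all x, |Δf(x)| ≤ c·L·M²/(2m). -/
open RealInnerProductSpace

theorem EuclideanSpace.norm_le_sqrt_card_mul_of_forall_abs_le {ι : Type*} [Fintype ι]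
    {v : EuclideanSpace ℝ ι} {M : ℝ} (hv : ∀ i, |v i| ≤ M) :
    ‖v‖ ≤ √(Fintype.card ι) * M := by
  cases isEmpty_or_nonempty ι with
  | inl _ => simp [Subsingleton.elim v 0]
  | inr hι =>
    have hM : 0 ≤ M := (abs_nonneg _).trans (hv hι.some)
    calc ‖v‖ = √(∑ i, |v i| ^ 2) := by simp [EuclideanSpace.norm_eq]
      _ ≤ √(∑ _ : ι, M ^ 2) := by gcongr with i; exact hv i
      _ = √(Fintype.card ι) * M := by
        rw [Finset.sum_const, Finset.card_univ, nsmul_eq_mul,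
          Real.sqrt_mul (Nat.cast_nonneg _), Real.sqrt_sq hM]

section InnerProductSpace

variable {E : Type*} [NormedAddCommGroup E] [InnerProductSpace ℝ E]

/-- Cauchy–Schwarz turns the hypothesis into `‖a‖² ≤ k ‖a‖ B`. -/
theorem norm_le_mul_of_sq_le_mul_abs_inner {a b : E} {k B : ℝ} (hk : 0 ≤ k) (hb : ‖b‖ ≤ B)
    (h : ‖a‖ ^ 2 ≤ k * |⟪a, b⟫|) : ‖a‖ ≤ k * B := by
  have hsq : ‖a‖ * ‖a‖ ≤ ‖a‖ * (k * B) :=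
    calc ‖a‖ * ‖a‖ = ‖a‖ ^ 2 := (sq _).symm
      _ ≤ k * |⟪a, b⟫| := h
      _ ≤ k * (‖a‖ * B) := by
        gcongr
        exact (abs_real_inner_le_norm a b).trans (by gcongr)
      _ = ‖a‖ * (k * B) := by ring
  rcases (norm_nonneg a).eq_or_lt with ha | ha
  · rw [← ha]
    exact mul_nonneg hk ((norm_nonneg b).trans hb)
  · exact le_of_mul_le_mul_left hsq ha

theorem abs_inner_le_mul_of_norm_le {a b : E} {A B : ℝ} (ha : ‖a‖ ≤ A) (hb : ‖b‖ ≤ B) :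
    |⟪a, b⟫| ≤ A * B :=
  (abs_real_inner_le_norm a b).trans
    (mul_le_mul ha hb (norm_nonneg b) ((norm_nonneg a).trans ha))

end InnerProductSpace

theorem leave_one_out_delta_bounds_general {X : Type*} (L m : ℕ)
    (c M : ℝ) (hc : 0 < c)
    (μL : X → EuclideanSpace ℝ (Fin L))
    (hμ : ∀ x p, |μL x p| ≤ M)
    (Δθ : EuclideanSpace ℝ (Fin L)) (xi : X)
    (hlem : ‖Δθ‖ ^ 2 ≤ (c / (2 * m)) * |(inner ℝ Δθ (μL xi) : ℝ)|) :
    ‖Δθ‖ ≤ (c / (2 * m)) * Real.sqrt L * M ∧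
    ∀ x : X, |(inner ℝ Δθ (μL x) : ℝ)| ≤ c * L * M ^ 2 / (2 * m) := by
  have hμnorm (x : X) : ‖μL x‖ ≤ √L * M := by
    simpa using EuclideanSpace.norm_le_sqrt_card_mul_of_forall_abs_le (hμ x)
  have hθ : ‖Δθ‖ ≤ c / (2 * m) * (√L * M) :=
    norm_le_mul_of_sq_le_mul_abs_inner (by positivity) (hμnorm xi) hlem
  refine ⟨by rwa [← mul_assoc] at hθ, fun x => ?_⟩
  calc |⟪Δθ, μL x⟫| ≤ c / (2 * m) * (√L * M) * (√L * M) :=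
        abs_inner_le_mul_of_norm_le hθ (hμnorm x)
    _ = c * (√L * √L) * M ^ 2 / (2 * m) := by ring
    _ = c * L * M ^ 2 / (2 * m) := by rw [Real.mul_self_sqrt (Nat.cast_nonneg L)]

/-- Given the Lemma-21 inequality `‖Δθ‖² ≤ (c/(2m))|Δf(xᵢ)|` with
`Δf(x) = ⟨Δθ, μ_L(x)⟩` and projection coordinates bounded by `M`, one gets
`‖Δθ‖ ≤ (c/(2m))·√L·M` and `|Δf(x)| ≤ c·L·M²/(2m)` for all `x`. -/
theorem leave_one_out_delta_bounds {X : Type*} (L m : ℕ) (hm : 1 ≤ m)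
    (c M : ℝ) (hc : 0 < c) (hM : 0 ≤ M)
    (μL : X → EuclideanSpace ℝ (Fin L))
    (hμ : ∀ x p, |μL x p| ≤ M)
    (Δθ : EuclideanSpace ℝ (Fin L)) (xi : X)
    (hlem : ‖Δθ‖ ^ 2 ≤ (c / (2 * m)) * |(inner ℝ Δθ (μL xi) : ℝ)|) :
    ‖Δθ‖ ≤ (c / (2 * m)) * Real.sqrt L * M ∧
    ∀ x : X, |(inner ℝ Δθ (μL x) : ℝ)| ≤ c * L * M ^ 2 / (2 * m) :=
  leave_one_out_delta_bounds_general L m c M hc μL hμ Δθ xi hlem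
end

section
/- Given the stationarity conditions θ_{kp} = Σ_{i:kᵢ=k} αᵢ yᵢ μ(xᵢ, l_p), Σᵢ αᵢ yᵢ = 0 and αᵢ = c/m - rᵢ, the Lagrangian of the soft-margin SVM simplifies to the dual objective: L = -½ Σᵢ Σⱼ [kᵢ = kⱼ] αᵢ αⱼ yᵢ yⱼ ⟨μ_L(xᵢ), μ_L(xⱼ)⟩ + Σᵢ αᵢ. -/
/-- The Lagrangian of the soft-margin L³-SVM. -/
noncomputable def l3svmLagrangian (K L m : ℕ) (c : ℝ) (kc : Fin m → Fin K)
    (μx : Fin m → Fin L → ℝ) (y α r : Fin m → ℝ)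
    (θ : Fin K × Fin L → ℝ) (b : ℝ) (ξ : Fin m → ℝ) : ℝ :=
  (1/2) * ∑ q : Fin K × Fin L, θ q ^ 2 + (c / m) * ∑ i, ξ i - ∑ i, r i * ξ i
    - ∑ i, α i * (y i * ((∑ p, θ (kc i, p) * μx i p) + b) + ξ i - 1)

lemma sum4_comm (K L m : ℕ) (f : Fin m → Fin m → Fin K → Fin L → ℝ) :
    ∑ k, ∑ p, ∑ i, ∑ j, f i j k p = ∑ i, ∑ j, ∑ k, ∑ p, f i j k p :=
  calc ∑ k, ∑ p, ∑ i, ∑ j, f i j k p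
      = ∑ k, ∑ i, ∑ p, ∑ j, f i j k p :=
        Finset.sum_congr rfl fun k _ => Finset.sum_comm
    _ = ∑ i, ∑ k, ∑ p, ∑ j, f i j k p := Finset.sum_comm
    _ = ∑ i, ∑ k, ∑ j, ∑ p, f i j k p :=
        Finset.sum_congr rfl fun i _ => Finset.sum_congr rfl fun k _ =>
          Finset.sum_comm
    _ = ∑ i, ∑ j, ∑ k, ∑ p, f i j k p :=
        Finset.sum_congr rfl fun i _ => Finset.sum_comm

/-- Given the stationarity conditions, the Lagrangian equals the dual
objective `-½ Σᵢ Σⱼ [kᵢ = kⱼ] αᵢαⱼyᵢyⱼ⟨μ_L(xᵢ), μ_L(xⱼ)⟩ + Σᵢ αᵢ`. -/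
theorem l3svm_lagrangian_eq_dual (K L m : ℕ) (hm : 1 ≤ m) (c : ℝ)
    (kc : Fin m → Fin K) (μx : Fin m → Fin L → ℝ) (y α r : Fin m → ℝ)
    (θ : Fin K × Fin L → ℝ) (b : ℝ) (ξ : Fin m → ℝ)
    (hθ : ∀ k p, θ (k, p) =
      ∑ i ∈ Finset.univ.filter (fun i => kc i = k), α i * y i * μx i p)
    (hsum : ∑ i, α i * y i = 0)
    (hαr : ∀ i, α i = c / m - r i) :
    l3svmLagrangian K L m c kc μx y α r θ b ξ =
      -(1/2) * ∑ i, ∑ j, (if kc i = kc j then (1:ℝ) else 0) *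
          (α i * α j * y i * y j * ∑ p, μx i p * μx j p) + ∑ i, α i := by
  set S : ℝ := ∑ i, ∑ j, (if kc i = kc j then (1:ℝ) else 0) *
      (α i * α j * y i * y j * ∑ p, μx i p * μx j p) with hS
  have hθ' : ∀ k p, θ (k, p) = ∑ i, (if kc i = k then α i * y i * μx i p else 0) := by
    intro k p
    rw [hθ k p, Finset.sum_filter]
  have key : ∀ i j : Fin m,
      (∑ k : Fin K, ∑ p, (if kc i = k then α i * y i * μx i p else 0) *
        (if kc j = k then α j * y j * μx j p else 0)) =
      (if kc i = kc j then (1:ℝ) else 0) *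
        (α i * α j * y i * y j * ∑ p, μx i p * μx j p) := by
    intro i j
    rw [Finset.sum_comm]
    have h1 : ∀ p, (∑ k : Fin K, (if kc i = k then α i * y i * μx i p else 0) *
        (if kc j = k then α j * y j * μx j p else 0)) =
        (if kc i = kc j then (1:ℝ) else 0) *
          ((α i * y i * μx i p) * (α j * y j * μx j p)) := by
      intro p
      have : ∀ k : Fin K, (if kc i = k then α i * y i * μx i p else 0) *
          (if kc j = k then α j * y j * μx j p else 0) =
          (if kc i = k then (if kc j = k then (α i * y i * μx i p) * (α j * y j * μx j p) else 0) else 0) := by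
        intro k
        by_cases h : kc i = k <;> by_cases h' : kc j = k <;> simp [h, h']
      simp only [this]
      rw [Finset.sum_ite_eq Finset.univ (kc i)
        (fun k => if kc j = k then (α i * y i * μx i p) * (α j * y j * μx j p) else 0)]
      by_cases h : kc i = kc j <;> simp [h, Ne.symm, eq_comm]
    simp only [h1]
    rw [← Finset.mul_sum]
    by_cases h : kc i = kc j <;> simp [h, Finset.mul_sum] <;>
      exact Finset.sum_congr rfl fun p _ => by ring
  have h1 : ∑ q : Fin K × Fin L, θ q ^ 2 = S := by
    rw [Fintype.sum_prod_type]
    calc ∑ k, ∑ p, θ (k, p) ^ 2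
        = ∑ k, ∑ p, ∑ i, ∑ j, (if kc i = k then α i * y i * μx i p else 0) *
            (if kc j = k then α j * y j * μx j p else 0) := by
          refine Finset.sum_congr rfl fun k _ => Finset.sum_congr rfl fun p _ => ?_
          rw [hθ' k p, sq, Finset.sum_mul_sum]
      _ = ∑ i, ∑ j, ∑ k, ∑ p, (if kc i = k then α i * y i * μx i p else 0) *
            (if kc j = k then α j * y j * μx j p else 0) :=
          sum4_comm K L m _
      _ = S := by
          exact Finset.sum_congr rfl fun i _ => Finset.sum_congr rfl fun j _ => key i j
  -- h2 : the cross term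
  have h2 : ∑ i, α i * (y i * (∑ p, θ (kc i, p) * μx i p)) = S := by
    rw [hS]
    refine Finset.sum_congr rfl fun i _ => ?_
    simp only [hθ' (kc i), Finset.sum_mul, Finset.mul_sum]
    rw [Finset.sum_comm]
    refine Finset.sum_congr rfl fun j _ => ?_
    by_cases h : kc i = kc j
    · rw [if_pos h]
      refine Finset.sum_congr rfl fun p _ => ?_
      rw [if_pos h.symm]; ring
    · rw [if_neg h]
      refine Finset.sum_congr rfl fun p _ => ?_
      rw [if_neg (Ne.symm h)]; ring
  have h3 : (∑ i, α i * (y i * ((∑ p, θ (kc i, p) * μx i p) + b) + ξ i - 1))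
      = (∑ i, α i * (y i * ∑ p, θ (kc i, p) * μx i p)) + (∑ i, α i * y i) * b
        + (∑ i, α i * ξ i) - ∑ i, α i := by
    rw [Finset.sum_mul, ← Finset.sum_add_distrib, ← Finset.sum_add_distrib,
      ← Finset.sum_sub_distrib]
    exact Finset.sum_congr rfl fun i _ => by ring
  have h4 : (c / m) * ∑ i, ξ i - ∑ i, r i * ξ i = ∑ i, α i * ξ i := by
    rw [Finset.mul_sum, ← Finset.sum_sub_distrib]
    exact Finset.sum_congr rfl fun i _ => by rw [hαr i]; ring
  unfold l3svmLagrangian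
  rw [h1, h3, h2, hsum]
  linear_combination h4
end
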